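/- In a finite MDP with irreducible induced chain P^π, for any pair (η, Q), the absolute error of the average-reward estimate is bounded by the sup-norm Bellman error: |η − η^π| ≤ max_{s,a} |r(s,a) + (P^π Q)(s,a) − η − Q(s,a)|. -/
import Mathlib


open Finset

noncomputable def Psa {S A : Type*} [Fintype S] [Fintype A] (P : S → A → S → ℝ)
    (pol : S → A → ℝ) (f : S → A → ℝ) : S → A → ℝ :=
  fun s a => ∑ s', P s a s' * ∑ a', pol s' a' * f s' a'

noncomputable def Pmat {S A : Type*} [Fintype A] (P : S → A → S → ℝ) (pol : S → A → ℝ) :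
    Matrix S S ℝ :=
  Matrix.of fun s s' => ∑ a, pol s a * P s a s'

/-- in a finite MDP with irreducible induced chain, for any pair `(η, Q)`,
`|η − η^π| ≤ max_{s,a} |r(s,a) + (P^π Q)(s,a) − η − Q(s,a)|`, where
`η^π = ∑_{s,a} d^π(s,a) r(s,a)` with `d^π(s,a) = d(s) π(a|s)` the stationary state-action
distribution. -/
theorem stmt12 {S A : Type*} [Fintype S] [Fintype A] [DecidableEq S]
    [Nonempty S] [Nonempty A]
    (P : S → A → S → ℝ) (pol : S → A → ℝ) (r : S → A → ℝ) (d : S → ℝ)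
    (η : ℝ) (Q : S → A → ℝ)
    (hP1 : ∀ s a s', 0 ≤ P s a s') (hP2 : ∀ s a, ∑ s', P s a s' = 1)
    (hpol1 : ∀ s a, 0 ≤ pol s a) (hpol2 : ∀ s, ∑ a, pol s a = 1)
    (hirr : ∀ s s' : S, ∃ t : ℕ, 0 < (Pmat P pol ^ t) s s')
    (hd1 : ∀ s, 0 ≤ d s) (hd2 : ∑ s, d s = 1)
    (hstat : ∀ s', ∑ s, d s * Pmat P pol s s' = d s') :
    |η - ∑ s, ∑ a, d s * pol s a * r s a|
      ≤ ⨆ s : S, ⨆ a : A, |r s a + Psa P pol Q s a - η - Q s a| := by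
  set δ : S → A → ℝ := fun s a => r s a + Psa P pol Q s a - η - Q s a with hδ
  set M : ℝ := ⨆ s : S, ⨆ a : A, |δ s a| with hM
  have hle : ∀ s a, |δ s a| ≤ M := by
    intro s a
    have h1 : |δ s a| ≤ ⨆ a, |δ s a| :=
      le_ciSup (Finite.bddAbove_range fun a => |δ s a|) a
    have h2 : (⨆ a, |δ s a|) ≤ M :=
      le_ciSup (Finite.bddAbove_range fun s => ⨆ a, |δ s a|) s
    exact h1.trans h2
  -- total mass of d⊗π is 1
  have hmass : ∑ s, ∑ a, d s * pol s a = 1 := by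
    have : ∀ s, ∑ a, d s * pol s a = d s := by
      intro s; rw [← Finset.mul_sum, hpol2, mul_one]
    simp_rw [this]; exact hd2
  have g : S → ℝ := fun s' => ∑ a', pol s' a' * Q s' a'
  -- stationarity of the pushforward of Q
  have key : ∑ s, ∑ a, d s * pol s a * Psa P pol Q s a
      = ∑ s, ∑ a, d s * pol s a * Q s a := by
    have step1 : ∀ s, ∑ a, d s * pol s a * Psa P pol Q s a
        = ∑ s', d s * (Pmat P pol s s' * ∑ a', pol s' a' * Q s' a') := by
      intro s
      calc ∑ a, d s * pol s a * Psa P pol Q s a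
          = ∑ a, ∑ s', d s * (pol s a * P s a s') * (∑ a', pol s' a' * Q s' a') := by
            refine Finset.sum_congr rfl fun a _ => ?_
            simp only [Psa, Finset.mul_sum]
            exact Finset.sum_congr rfl fun s' _ =>
              Finset.sum_congr rfl fun a' _ => by ring
        _ = ∑ s', ∑ a, d s * (pol s a * P s a s') * (∑ a', pol s' a' * Q s' a') :=
            Finset.sum_comm
        _ = ∑ s', d s * (Pmat P pol s s' * ∑ a', pol s' a' * Q s' a') := by
            refine Finset.sum_congr rfl fun s' _ => ?_
            simp only [Pmat, Matrix.of_apply]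
            rw [Finset.sum_mul, Finset.mul_sum]
            exact Finset.sum_congr rfl fun a _ => by ring
    calc ∑ s, ∑ a, d s * pol s a * Psa P pol Q s a
        = ∑ s, ∑ s', d s * (Pmat P pol s s' * ∑ a', pol s' a' * Q s' a') :=
          Finset.sum_congr rfl fun s _ => step1 s
      _ = ∑ s', ∑ s, d s * (Pmat P pol s s' * ∑ a', pol s' a' * Q s' a') :=
          Finset.sum_comm
      _ = ∑ s', (∑ s, d s * Pmat P pol s s') * ∑ a', pol s' a' * Q s' a' := by
          refine Finset.sum_congr rfl fun s' _ => ?_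
          rw [Finset.sum_mul]
          exact Finset.sum_congr rfl fun s _ => by ring
      _ = ∑ s', d s' * ∑ a', pol s' a' * Q s' a' := by simp_rw [hstat]
      _ = ∑ s, ∑ a, d s * pol s a * Q s a := by
          refine Finset.sum_congr rfl fun s' _ => ?_
          rw [Finset.mul_sum]
          exact Finset.sum_congr rfl fun a' _ => by ring
  -- the weighted Bellman error equals η^π − η
  have hsum : ∑ s, ∑ a, d s * pol s a * δ s a
      = (∑ s, ∑ a, d s * pol s a * r s a) - η := by
    have expand : ∀ s a, d s * pol s a * δ s a
        = d s * pol s a * r s a + d s * pol s a * Psa P pol Q s a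
          - d s * pol s a * η - d s * pol s a * Q s a := by
      intro s a; simp only [hδ]; ring
    simp_rw [expand, Finset.sum_sub_distrib, Finset.sum_add_distrib]
    rw [key]
    have : ∑ s, ∑ a, d s * pol s a * η = η := by
      simp_rw [← Finset.sum_mul]
      rw [hmass, one_mul]
    rw [this]; ring
  have habs : |η - ∑ s, ∑ a, d s * pol s a * r s a|
      = |∑ s, ∑ a, d s * pol s a * δ s a| := by
    rw [hsum, abs_sub_comm]
  rw [habs]
  calc |∑ s, ∑ a, d s * pol s a * δ s a|
      ≤ ∑ s, ∑ a, |d s * pol s a * δ s a| := by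
        refine (Finset.abs_sum_le_sum_abs _ _).trans ?_
        exact Finset.sum_le_sum fun s _ => Finset.abs_sum_le_sum_abs _ _
    _ ≤ ∑ s, ∑ a, d s * pol s a * M := by
        refine Finset.sum_le_sum fun s _ => Finset.sum_le_sum fun a _ => ?_
        rw [abs_mul, abs_of_nonneg (mul_nonneg (hd1 s) (hpol1 s a))]
        exact mul_le_mul_of_nonneg_left (hle s a) (mul_nonneg (hd1 s) (hpol1 s a))
    _ = M := by
        simp_rw [← Finset.sum_mul]
        rw [hmass, one_mul]
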